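/- arXiv:2011.09866 — 2 statements merged into one kernel-verified Lean document; each statement's English description precedes it below -/
import Mathlib

section
/- [TxtPsdBc_C]_REC = [TxtGBc_C]_REC; that is, a class of recursive languages is Bc_C-learnable by a partial computable partially set-driven learner if and only if it is Bc_C-learnable by a partial computable Gold-style (full-information) learner. -/
/-!
Simulating a partially set-driven learner by a Gold-style one is immediate: the content of `T[n]`
and `n` are computable from `T[n]`.

Conversely, let `h` be a Gold-style `Bc_C`-learner for `L`. Call `σ` a good root if every value
computed by a hypothesis that `h` outputs on an extension of `σ` by data from `L` is correct for
`L`. A good root exists: otherwise interleaving a text for `L` with extensions leading to wrong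
values yields a text for `L` on which `h` errs infinitely often. On data `D` at time `t`, the new
learner picks the root of least code that is consistent with `D` and not yet refuted, where a
refutation consists of two extensions by data from `D` whose hypotheses, run for `t` steps, give
different values at one point. A good root is never refuted, and on a text for `L` every root of
smaller code is eventually inconsistent with the data or refuted against a correct hypothesis, so
the choice settles on the least good root. The hypothesis at `x` searches an extension of the
chosen root by data from `D` on which the hypothesis of `h` converges at `x`, and returns that
value; after the choice has settled, this computes the characteristic function of `L`.
-/

namespace InductiveInference

/-- `φ_e` : the `e`-th partial computable function, via the standard numbering
of `Nat.Partrec.Code`. -/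
def phi (e : ℕ) : ℕ →. ℕ := (Denumerable.ofNat Nat.Partrec.Code e).eval

/-- `W_e` : the domain of `φ_e`. -/
def Wset (e : ℕ) : Set ℕ := (phi e).Dom

/-- `e` is a C-index: `φ_e` is total with values in `{0,1}`. -/
def CIndex (e : ℕ) : Prop := ∀ x, phi e x = Part.some 0 ∨ phi e x = Part.some 1

/-- `C_e = {x | φ_e x = 1}`. -/
def Cset (e : ℕ) : Set ℕ := {x | phi e x = Part.some 1}

/-- A language is recursive (decidable). -/
def RecLang (L : Set ℕ) : Prop := ∃ f : ℕ → Bool, Computable f ∧ ∀ x, x ∈ L ↔ f x = true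

/-- Texts: total functions `ℕ → ℕ ∪ {#}`; `none` is the pause symbol `#`. -/
abbrev Text := ℕ → Option ℕ

/-- The content of a text: its range minus the pause symbol. -/
def content (T : Text) : Set ℕ := {x | ∃ n, T n = some x}

/-- The initial segment `T[n] = (T 0, …, T (n-1))`. -/
def initSeg (T : Text) (n : ℕ) : List (Option ℕ) := (List.range n).map T

/-- The (finite) content of the initial segment `T[n]`. -/
def fincontent (T : Text) (n : ℕ) : Finset ℕ := ((initSeg T n).filterMap id).toFinset

/-- A canonical numerical code for a finite set of naturals. -/
def setCode (D : Finset ℕ) : ℕ := Encodable.encode (D.sort (· ≤ ·))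

/-- Learners: partial functions on (suitably coded) natural number inputs. -/
abbrev Learner := ℕ →. ℕ

/-- The learner is partial computable. -/
def PartComputable (h : Learner) : Prop := Nat.Partrec h

/-- The learner is total computable. -/
def TotalComputable (h : Learner) : Prop := Nat.Partrec h ∧ ∀ x, (h x).Dom

/-- Hypothesis sequences (possibly undefined at some points). -/
abbrev HypSeq := ℕ → Part ℕ

/-- Gold-style (full-information) learning: `G(h,T)(i) = h(T[i])`. -/
def Gop (h : Learner) (T : Text) (i : ℕ) : Part ℕ :=
  h (Encodable.encode (initSeg T i))

/-- Partially set-driven learning: `Psd(h,T)(i) = h(content T[i], i)`. -/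
def Psdop (h : Learner) (T : Text) (i : ℕ) : Part ℕ :=
  h (Nat.pair (setCode (fincontent T i)) i)

/-- Set-driven learning: `Sd(h,T)(i) = h(content T[i])`. -/
def Sdop (h : Learner) (T : Text) (i : ℕ) : Part ℕ :=
  h (setCode (fincontent T i))

/-- Iterative learning: the input `none` codes the empty start sequence `ε`,
and `some (e, x)` codes the pair of previous hypothesis `e` and datum `x`. -/
def Itop (h : Learner) (T : Text) : ℕ → Part ℕ
  | 0 => h (Encodable.encode (none : Option (ℕ × Option ℕ)))
  | i + 1 => (Itop h T i).bind fun e =>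
      h (Encodable.encode (some (e, T i) : Option (ℕ × Option ℕ)))

/-- Transductive learning: the learner receives the single (coded) datum
`T i`; the output `0` codes the distinguished symbol `?`, and the output
`e + 1` codes the hypothesis `e`.  The value `?` of the hypothesis sequence
is represented by `Part.none`. -/
def Tdop (h : Learner) (T : Text) : ℕ → Part ℕ
  | 0 => Part.none
  | i + 1 => (h (Encodable.encode (T i))).bind fun v =>
      match v with
      | 0 => Tdop h T i
      | e + 1 => Part.some e

/-- `Ex_C`: syntactic convergence to a single correct C-index. -/
def ExC (p : HypSeq) (T : Text) : Prop :=
  ∃ n₀, (∀ n, n₀ ≤ n → p n = p n₀) ∧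
    ∃ e, p n₀ = Part.some e ∧ CIndex e ∧ Cset e = content T

/-- `Ex_W`: syntactic convergence to a single correct W-index. -/
def ExW (p : HypSeq) (T : Text) : Prop :=
  ∃ n₀, (∀ n, n₀ ≤ n → p n = p n₀) ∧
    ∃ e, p n₀ = Part.some e ∧ Wset e = content T

/-- `Bc_C`: semantic convergence to correct C-indices. -/
def BcC (p : HypSeq) (T : Text) : Prop :=
  ∃ n₀, ∀ n, n₀ ≤ n → ∃ e, p n = Part.some e ∧ CIndex e ∧ Cset e = content T

/-- `Bc_W`: semantic convergence to correct W-indices. -/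
def BcW (p : HypSeq) (T : Text) : Prop :=
  ∃ n₀, ∀ n, n₀ ≤ n → ∃ e, p n = Part.some e ∧ Wset e = content T

/-- `CInd`: every hypothesis output is a C-index. -/
def CIndRes (p : HypSeq) (_T : Text) : Prop :=
  ∀ i e, p i = Part.some e → CIndex e

/-- `T`: the always-true restriction. -/
def TrueRes (_p : HypSeq) (_T : Text) : Prop := True

abbrev InteractionOp := Learner → Text → HypSeq
abbrev Restriction := HypSeq → Text → Prop

/-- Conjunction of restrictions. -/
def andRes (δ δ' : Restriction) : Restriction := fun p T => δ p T ∧ δ' p T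

/-- `h` `Txtβδ`-learns `L`: on every text for `L` the restriction `δ` holds. -/
def Learns (β : InteractionOp) (δ : Restriction) (h : Learner) (L : Set ℕ) : Prop :=
  ∀ T : Text, content T = L → δ (β h T) T

/-- The restriction `α` holds for `h` on all texts whatsoever. -/
def OnAllTexts (β : InteractionOp) (α : Restriction) (h : Learner) : Prop :=
  ∀ T : Text, α (β h T) T

/-- A class of recursive languages. -/
def IsRecClass (ℒ : Set (Set ℕ)) : Prop := ∀ L ∈ ℒ, RecLang L

/-- `[𝒞Txtβδ]_REC`: classes of recursive languages learnable by some
learner from `C` under interaction operator `β` and restriction `δ`. -/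
def LearnableREC (C : Learner → Prop) (β : InteractionOp) (δ : Restriction) :
    Set (Set (Set ℕ)) :=
  {ℒ | IsRecClass ℒ ∧ ∃ h, C h ∧ ∀ L ∈ ℒ, Learns β δ h L}

/-- `[τ(α)𝒞Txtβδ]_REC`: as above, where additionally `α` must hold on
arbitrary texts. -/
def TauLearnableREC (C : Learner → Prop) (α : Restriction) (β : InteractionOp)
    (δ : Restriction) : Set (Set (Set ℕ)) :=
  {ℒ | IsRecClass ℒ ∧ ∃ h, C h ∧ OnAllTexts β α h ∧ ∀ L ∈ ℒ, Learns β δ h L}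

open Encodable Denumerable Filter

/-! ### Finite sequences and texts -/

def seqContent (σ : List (Option ℕ)) : Finset ℕ := σ.reduceOption.toFinset

@[simp]
lemma mem_seqContent {σ : List (Option ℕ)} {x : ℕ} : x ∈ seqContent σ ↔ some x ∈ σ := by
  simp [seqContent, List.reduceOption_mem_iff]

@[simp]
lemma seqContent_nil : seqContent [] = ∅ := rfl

lemma seqContent_append (σ ρ : List (Option ℕ)) :
    seqContent (σ ++ ρ) = seqContent σ ∪ seqContent ρ := by
  ext; simp

lemma fincontent_eq_seqContent (T : Text) (n : ℕ) : fincontent T n = seqContent (initSeg T n) :=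
  rfl

lemma length_initSeg (T : Text) (n : ℕ) : (initSeg T n).length = n := by
  simp [initSeg]

lemma mem_fincontent {T : Text} {n x : ℕ} : x ∈ fincontent T n ↔ ∃ i < n, T i = some x := by
  simp [fincontent_eq_seqContent, initSeg]

lemma fincontent_mono (T : Text) : Monotone (fincontent T) := fun _ _ hmn _ hx =>
  let ⟨i, hi, hTi⟩ := mem_fincontent.1 hx
  mem_fincontent.2 ⟨i, hi.trans_le hmn, hTi⟩

lemma coe_fincontent_subset_content (T : Text) (n : ℕ) : ↑(fincontent T n) ⊆ content T :=
  fun _ hx => let ⟨i, _, hTi⟩ := mem_fincontent.1 hx; ⟨i, hTi⟩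

lemma coe_subset_content_of_subset_fincontent {T : Text} {n : ℕ} {S : Finset ℕ}
    (hS : S ⊆ fincontent T n) : ↑S ⊆ content T :=
  (Finset.coe_subset.2 hS).trans (coe_fincontent_subset_content T n)

lemma eventually_subset_fincontent {T : Text} {S : Finset ℕ} (hS : ↑S ⊆ content T) :
    ∀ᶠ n in atTop, S ⊆ fincontent T n := by
  have hx : ∀ x ∈ S, ∀ᶠ n in atTop, x ∈ fincontent T n := fun x hx =>
    let ⟨i, hTi⟩ := hS hx
    eventually_atTop.2 ⟨i + 1, fun _ hn =>
      fincontent_mono T hn (mem_fincontent.2 ⟨i, by omega, hTi⟩)⟩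
  exact (eventually_all_finset S).2 hx

def prependText (σ : List (Option ℕ)) (T : Text) : Text :=
  fun i => if h : i < σ.length then σ[i] else T (i - σ.length)

lemma initSeg_prependText (σ : List (Option ℕ)) (T : Text) (m : ℕ) :
    initSeg (prependText σ T) (σ.length + m) = σ ++ initSeg T m := by
  refine List.ext_getElem (by simp [length_initSeg]) fun i hi _ => ?_
  simp only [initSeg, List.getElem_map, List.getElem_range, prependText]
  split_ifs with h
  · rw [List.getElem_append_left h]
  · rw [List.getElem_append_right (by omega)]
    simp

lemma content_prependText (σ : List (Option ℕ)) (T : Text) :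
    content (prependText σ T) = ↑(seqContent σ) ∪ content T := by
  ext x
  simp only [content, prependText, Set.mem_ofPred_eq, Set.mem_union, Finset.mem_coe,
    mem_seqContent, List.mem_iff_getElem]
  constructor
  · rintro ⟨n, hn⟩
    split_ifs at hn with h
    · exact Or.inl ⟨n, h, hn⟩
    · exact Or.inr ⟨_, hn⟩
  · rintro (⟨i, hi, hσi⟩ | ⟨n, hn⟩)
    · exact ⟨i, by rw [dif_pos hi, hσi]⟩
    · exact ⟨σ.length + n, by rw [dif_neg (by omega)]; simpa using hn⟩

/-- The limit of a chain of finite sequences under the prefix order. -/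
def limitText (σ : ℕ → List (Option ℕ)) : Text := fun i => (σ (i + 1)).getD i none

section limitText

variable {σ : ℕ → List (Option ℕ)}

lemma limitText_eq_getElem (hpre : ∀ k, σ k <+: σ (k + 1)) (hlen : ∀ k, k ≤ (σ k).length)
    {k i : ℕ} (hi : i < (σ k).length) : limitText σ i = (σ k)[i] := by
  have hchain : ∀ j k, j ≤ k → σ j <+: σ k := fun j k hjk => by
    induction k, hjk using Nat.le_induction with
    | base => exact List.prefix_refl _
    | succ k _ ih => exact ih.trans (hpre k)
  have hi' : i < (σ (i + 1)).length := by have := hlen (i + 1); omega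
  rw [limitText, List.getD_eq_getElem _ _ hi']
  rcases le_total (i + 1) k with hle | hle
  · exact (hchain _ _ hle).getElem hi'
  · exact ((hchain _ _ hle).getElem hi).symm

lemma initSeg_limitText (hpre : ∀ k, σ k <+: σ (k + 1)) (hlen : ∀ k, k ≤ (σ k).length) (k : ℕ) :
    initSeg (limitText σ) (σ k).length = σ k :=
  List.ext_getElem (length_initSeg _ _) fun i hi _ => by
    simp only [initSeg, List.getElem_map, List.getElem_range]
    exact limitText_eq_getElem hpre hlen (by simpa [length_initSeg] using hi)

lemma content_limitText (hpre : ∀ k, σ k <+: σ (k + 1)) (hlen : ∀ k, k ≤ (σ k).length) :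
    content (limitText σ) = ⋃ k, ↑(seqContent (σ k)) := by
  ext x
  simp only [content, Set.mem_ofPred_eq, Set.mem_iUnion, Finset.mem_coe, mem_seqContent,
    List.mem_iff_getElem]
  constructor
  · rintro ⟨i, hi⟩
    have hi' : i < (σ (i + 1)).length := by have := hlen (i + 1); omega
    exact ⟨i + 1, i, hi', by rw [← limitText_eq_getElem hpre hlen hi', hi]⟩
  · rintro ⟨k, i, hi, hσi⟩
    exact ⟨i, by rw [limitText_eq_getElem hpre hlen hi, hσi]⟩

end limitText

/-! ### Good roots -/

def hypValue (h : Learner) (σ : List (Option ℕ)) (x : ℕ) : Part ℕ :=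
  (h (encode σ)).bind fun c => phi c x

lemma cIndex_and_cset_eq_iff {c : ℕ} {L : Set ℕ} :
    CIndex c ∧ Cset c = L ↔ ∀ x, phi c x = Part.some (L.indicator 1 x) := by
  constructor
  · rintro ⟨hc, rfl⟩ x
    by_cases hx : x ∈ Cset c
    · rw [Set.indicator_of_mem hx]; exact hx
    · rw [Set.indicator_of_notMem hx]; exact (hc x).resolve_right hx
  · intro hc
    refine ⟨fun x => ?_, Set.ext fun x => ?_⟩
    · by_cases hx : x ∈ L
      · exact Or.inr (by rw [hc, Set.indicator_of_mem hx]; rfl)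
      · exact Or.inl (by rw [hc, Set.indicator_of_notMem hx])
    · by_cases hx : x ∈ L <;> simp [Cset, hc, hx]

lemma BcC.eventually_hypValue_initSeg {h : Learner} {T : Text} (hT : BcC (Gop h T) T) :
    ∀ᶠ n in atTop, ∀ x, hypValue h (initSeg T n) x = Part.some ((content T).indicator 1 x) := by
  obtain ⟨n₀, hn₀⟩ := hT
  refine eventually_atTop.2 ⟨n₀, fun n hn x => ?_⟩
  obtain ⟨c, hc, hC⟩ := hn₀ n hn
  change (Gop h T n).bind _ = _
  rw [hc, Part.bind_some, cIndex_and_cset_eq_iff.1 hC]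

lemma Learns.eventually_hypValue_append {h : Learner} {L : Set ℕ} (hh : Learns Gop BcC h L)
    {T : Text} (hT : content T = L) {σ : List (Option ℕ)} (hσ : ↑(seqContent σ) ⊆ L) :
    ∀ᶠ m in atTop, ∀ x, hypValue h (σ ++ initSeg T m) x = Part.some (L.indicator 1 x) := by
  have hσT : content (prependText σ T) = L := by
    rw [content_prependText, hT, Set.union_eq_self_of_subset_left hσ]
  obtain ⟨N, hN⟩ := (hh _ hσT).eventually_hypValue_initSeg.exists_forall_of_atTop
  refine eventually_atTop.2 ⟨N, fun m hm => ?_⟩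
  simpa only [initSeg_prependText, hσT] using hN (σ.length + m) (by omega)

def IsGoodRoot (h : Learner) (L : Set ℕ) (σ : List (Option ℕ)) : Prop :=
  ↑(seqContent σ) ⊆ L ∧ ∀ ρ, ↑(seqContent ρ) ⊆ L →
    ∀ x v, v ∈ hypValue h (σ ++ ρ) x → v = L.indicator 1 x

def diagSeq (T : Text) (R : List (Option ℕ) → List (Option ℕ)) : ℕ → List (Option ℕ)
  | 0 => []
  | k + 1 => (diagSeq T R k ++ [T k]) ++ R (diagSeq T R k ++ [T k])

lemma diagSeq_prefix_succ (T : Text) (R : List (Option ℕ) → List (Option ℕ)) (k : ℕ) :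
    diagSeq T R k <+: diagSeq T R (k + 1) := by
  rw [diagSeq, List.append_assoc]
  exact List.prefix_append _ _

lemma le_length_diagSeq (T : Text) (R : List (Option ℕ) → List (Option ℕ)) (k : ℕ) :
    k ≤ (diagSeq T R k).length := by
  induction k with
  | zero => simp
  | succ k ih => simp only [diagSeq, List.length_append, List.length_singleton]; omega

theorem Learns.exists_isGoodRoot {h : Learner} {L : Set ℕ} (hh : Learns Gop BcC h L)
    {T : Text} (hT : content T = L) : ∃ σ, IsGoodRoot h L σ := by
  by_contra! hbad
  have hext : ∀ σ, ∃ ρ, ↑(seqContent σ) ⊆ L → ↑(seqContent ρ) ⊆ L ∧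
      ∃ x v, v ∈ hypValue h (σ ++ ρ) x ∧ v ≠ L.indicator 1 x := fun σ => by
    by_cases hσ : ↑(seqContent σ) ⊆ L
    · have := hbad σ
      simp only [IsGoodRoot, hσ, true_and, not_forall] at this
      obtain ⟨ρ, hρ, x, v, hv, hne⟩ := this
      exact ⟨ρ, fun _ => ⟨hρ, x, v, hv, hne⟩⟩
    · exact ⟨[], fun h => absurd h hσ⟩
  choose R hR using hext
  have hpre := diagSeq_prefix_succ T R
  have hlen := le_length_diagSeq T R
  set σ := diagSeq T R
  have hTk : ∀ k, ↑(seqContent [T k]) ⊆ L := fun k x hx => by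
    simp only [Finset.mem_coe, mem_seqContent, List.mem_singleton] at hx
    exact hT ▸ ⟨k, hx.symm⟩
  have hσL : ∀ k, ↑(seqContent (σ k)) ⊆ L ∧ ↑(seqContent (σ k ++ [T k])) ⊆ L := fun k => by
    induction k with
    | zero => simp [σ, diagSeq, hTk 0]
    | succ k ih =>
      have h1 : ↑(seqContent (σ (k + 1))) ⊆ L := by
        simp only [σ, diagSeq, seqContent_append, Finset.coe_union, Set.union_subset_iff]
        exact ⟨⟨ih.1, hTk k⟩, (hR _ ih.2).1⟩
      simpa [seqContent_append, h1] using hTk (k + 1)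
  have hcontent : content (limitText σ) = L := by
    rw [content_limitText hpre hlen]
    refine subset_antisymm (Set.iUnion_subset fun k => (hσL k).1) fun x hx => ?_
    obtain ⟨k, hk⟩ := hT ▸ hx
    exact Set.mem_iUnion.2 ⟨k + 1, by simp [σ, diagSeq, seqContent_append, hk]⟩
  obtain ⟨k, hk⟩ := (hh _ hcontent).eventually_hypValue_initSeg.exists_forall_of_atTop
  obtain ⟨x, v, hv, hne⟩ := (hR _ (hσL k).2).2
  have hcorrect := hk (σ (k + 1)).length (by have := hlen (k + 1); omega) x
  rw [initSeg_limitText hpre hlen, hcontent] at hcorrect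
  exact hne (Part.mem_some_iff.1 (hcorrect ▸ hv))

/-! ### Refuting roots in the limit -/

open Nat.Partrec (Code)

lemma rfindOpt_eq_some_of_forall {α : Type*} {f : ℕ → Option α} {a : α}
    (hex : ∃ n, (f n).isSome) (huniq : ∀ n b, f n = some b → b = a) :
    Nat.rfindOpt f = Part.some a := by
  obtain ⟨n, hn⟩ := hex
  obtain ⟨b, hb⟩ := Option.isSome_iff_exists.1 hn
  have hdom : (Nat.rfindOpt f).Dom := Nat.rfindOpt_dom.2 ⟨n, b, hb⟩
  obtain ⟨m, hm⟩ := Nat.rfindOpt_spec (Part.get_mem hdom)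
  exact Part.eq_some_iff.2 (huniq m _ hm ▸ Part.get_mem hdom)

section Approximation

variable (ch : Code)

/-- `hypValue ch.eval σ x`, with both computations cut off after `k` steps. -/
def boundedHypValue (k : ℕ) (σ : List (Option ℕ)) (x : ℕ) : Option ℕ :=
  (ch.evaln k (encode σ)).bind fun c => (ofNat Code c).evaln k x

/-- A witness `w = (ρ₁, ρ₂, x)` that `σ` is not a good root for any language containing `D`. -/
def Refutes (D : List ℕ) (k : ℕ) (σ : List (Option ℕ))
    (w : List (Option ℕ) × List (Option ℕ) × ℕ) : Prop :=
  seqContent w.1 ⊆ D.toFinset ∧ seqContent w.2.1 ⊆ D.toFinset ∧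
    (boundedHypValue ch k (σ ++ w.1) w.2.2).isSome ∧
    (boundedHypValue ch k (σ ++ w.2.1) w.2.2).isSome ∧
    boundedHypValue ch k (σ ++ w.1) w.2.2 ≠ boundedHypValue ch k (σ ++ w.2.1) w.2.2

instance (D : List ℕ) (k : ℕ) (σ : List (Option ℕ)) : DecidablePred (Refutes ch D k σ) :=
  fun _ => by unfold Refutes; infer_instance

def IsAlive (D : List ℕ) (t : ℕ) (σ : List (Option ℕ)) : Prop :=
  seqContent σ ⊆ D.toFinset ∧ ∀ w < t, ¬Refutes ch D t σ (ofNat _ w)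

instance (D : List ℕ) (t : ℕ) : DecidablePred (IsAlive ch D t) :=
  fun _ => by unfold IsAlive; infer_instance

/-- The alive root of least code below `t`; the root of code `t` if there is none. -/
def currentRoot (D : List ℕ) (t : ℕ) : List (Option ℕ) :=
  ofNat _ ((List.range t).findIdx fun a => decide (IsAlive ch D t (ofNat _ a)))

def extensionValue (D : List ℕ) (σ : List (Option ℕ)) (x : ℕ) (s : List (Option ℕ) × ℕ) :
    Option ℕ :=
  if seqContent s.1 ⊆ D.toFinset then boundedHypValue ch s.2 (σ ++ s.1) x else none

def guess (D : List ℕ) (t x : ℕ) : Part ℕ :=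
  Nat.rfindOpt fun s => extensionValue ch D (currentRoot ch D t) x (ofNat _ s)

variable {ch}

lemma mem_hypValue_of_boundedHypValue_eq_some {k : ℕ} {σ : List (Option ℕ)} {x v : ℕ}
    (hv : boundedHypValue ch k σ x = some v) : v ∈ hypValue ch.eval σ x := by
  obtain ⟨c, hc, hcv⟩ := Option.bind_eq_some_iff.1 hv
  exact Part.mem_bind (Code.evaln_sound hc) (Code.evaln_sound hcv)

lemma eventually_boundedHypValue_eq_some {σ : List (Option ℕ)} {x v : ℕ}
    (hv : v ∈ hypValue ch.eval σ x) : ∀ᶠ k in atTop, boundedHypValue ch k σ x = some v := by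
  obtain ⟨c, hc, hcv⟩ := Part.mem_bind_iff.1 hv
  obtain ⟨k₁, hk₁⟩ := Code.evaln_complete.1 hc
  obtain ⟨k₂, hk₂⟩ := Code.evaln_complete.1 hcv
  filter_upwards [eventually_ge_atTop k₁, eventually_ge_atTop k₂] with k h₁ h₂
  rw [boundedHypValue, Code.evaln_mono h₁ hk₁, Option.bind_some, Code.evaln_mono h₂ hk₂]

lemma IsGoodRoot.not_refutes {L : Set ℕ} {σ : List (Option ℕ)} (hσ : IsGoodRoot ch.eval L σ)
    {D : List ℕ} (hD : ↑D.toFinset ⊆ L) (k : ℕ) (w : List (Option ℕ) × List (Option ℕ) × ℕ) :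
    ¬Refutes ch D k σ w := by
  rintro ⟨h₁, h₂, hs₁, hs₂, hne⟩
  obtain ⟨u₁, hu₁⟩ := Option.isSome_iff_exists.1 hs₁
  obtain ⟨u₂, hu₂⟩ := Option.isSome_iff_exists.1 hs₂
  have hcorrect : ∀ {ρ u}, seqContent ρ ⊆ D.toFinset →
      boundedHypValue ch k (σ ++ ρ) w.2.2 = some u → u = L.indicator 1 w.2.2 := fun hρ hu =>
    hσ.2 _ ((Finset.coe_subset.2 hρ).trans hD) _ _ (mem_hypValue_of_boundedHypValue_eq_some hu)
  rw [hu₁, hu₂, hcorrect h₁ hu₁, hcorrect h₂ hu₂] at hne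
  exact hne rfl

lemma currentRoot_eq {D : List ℕ} {t a : ℕ} (ha : IsAlive ch D t (ofNat _ a))
    (hmin : ∀ b < a, ¬IsAlive ch D t (ofNat _ b)) (hat : a < t) :
    currentRoot ch D t = ofNat _ a := by
  rw [currentRoot, (List.findIdx_eq (by simpa using hat)).2]
  simpa using ⟨ha, fun j hj => hmin j hj⟩

end Approximation

section Convergence

variable {ch : Code} {L : Set ℕ} {T : Text}

lemma IsGoodRoot.eventually_isAlive {σ : List (Option ℕ)} (hσ : IsGoodRoot ch.eval L σ)
    (hT : content T = L) : ∀ᶠ n in atTop, IsAlive ch (fincontent T n).sort n σ := by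
  filter_upwards [eventually_subset_fincontent (hT ▸ hσ.1)] with n hn
  refine ⟨by simpa using hn, fun w _ => hσ.not_refutes ?_ _ _⟩
  simpa [← hT] using coe_fincontent_subset_content T n

lemma eventually_not_isAlive (hh : Learns Gop BcC ch.eval L) (hT : content T = L)
    {σ : List (Option ℕ)} (hσ : ¬IsGoodRoot ch.eval L σ) :
    ∀ᶠ n in atTop, ¬IsAlive ch (fincontent T n).sort n σ := by
  by_cases hσL : ↑(seqContent σ) ⊆ L
  swap
  · refine Eventually.of_forall fun n hn => hσL ?_
    exact hT ▸ coe_subset_content_of_subset_fincontent (by simpa using hn.1)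
  obtain ⟨ρ, hρ, x, v, hv, hne⟩ : ∃ ρ, ↑(seqContent ρ) ⊆ L ∧
      ∃ x v, v ∈ hypValue ch.eval (σ ++ ρ) x ∧ v ≠ L.indicator 1 x := by
    simpa [IsGoodRoot, hσL] using hσ
  obtain ⟨M, hM⟩ := (hh.eventually_hypValue_append hT hσL).exists
  filter_upwards [eventually_subset_fincontent (hT ▸ hρ), eventually_ge_atTop M,
    eventually_gt_atTop (encode (ρ, initSeg T M, x)), eventually_boundedHypValue_eq_some hv,
    eventually_boundedHypValue_eq_some (hM x ▸ Part.mem_some _)] with n h₁ h₂ h₃ h₄ h₅ halive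
  refine halive.2 _ h₃ ?_
  rw [ofNat_encode]
  exact ⟨by simpa using h₁, by simpa [← fincontent_eq_seqContent] using fincontent_mono T h₂,
    by simp [h₄], by simp [h₅], by simp [h₄, h₅, hne]⟩

lemma eventually_currentRoot_eq (hh : Learns Gop BcC ch.eval L) (hT : content T = L) {a : ℕ}
    (ha : IsGoodRoot ch.eval L (ofNat _ a)) (hmin : ∀ b < a, ¬IsGoodRoot ch.eval L (ofNat _ b)) :
    ∀ᶠ n in atTop, currentRoot ch (fincontent T n).sort n = ofNat _ a := by
  have hdead : ∀ᶠ n in atTop, ∀ b ∈ Finset.range a,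
      ¬IsAlive ch (fincontent T n).sort n (ofNat _ b) :=
    (eventually_all_finset _).2 fun b hb =>
      eventually_not_isAlive hh hT (hmin b (Finset.mem_range.1 hb))
  filter_upwards [ha.eventually_isAlive hT, hdead, eventually_gt_atTop a] with n h₁ h₂ h₃
  exact currentRoot_eq h₁ (fun b hb => h₂ b (Finset.mem_range.2 hb)) h₃

lemma eventually_guess_eq (hh : Learns Gop BcC ch.eval L) (hT : content T = L) :
    ∀ᶠ n in atTop, ∀ x, guess ch (fincontent T n).sort n x = Part.some (L.indicator 1 x) := by
  classical
  have hex : ∃ a, IsGoodRoot ch.eval L (ofNat _ a) :=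
    let ⟨σ, hσ⟩ := hh.exists_isGoodRoot hT
    ⟨encode σ, by rwa [ofNat_encode]⟩
  have hgood := Nat.find_spec hex
  obtain ⟨M, hM⟩ := (hh.eventually_hypValue_append hT hgood.1).exists
  filter_upwards [eventually_currentRoot_eq hh hT hgood fun b => Nat.find_min hex,
    eventually_ge_atTop M] with n hroot hn x
  rw [guess, hroot]
  refine rfindOpt_eq_some_of_forall ?_ fun s v hv => ?_
  · obtain ⟨k, hk⟩ := (eventually_boundedHypValue_eq_some (hM x ▸ Part.mem_some _)).exists
    refine ⟨encode (initSeg T M, k), ?_⟩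
    simp [extensionValue, ← fincontent_eq_seqContent, fincontent_mono T hn, hk]
  · simp only [extensionValue] at hv
    split_ifs at hv with hs
    refine hgood.2 _ ?_ x v (mem_hypValue_of_boundedHypValue_eq_some hv)
    exact hT ▸ coe_subset_content_of_subset_fincontent (by simpa using hs)

end Convergence

/-! ### Computability of the learner -/

section Computability

variable {α : Type*} [Primcodable α]

lemma primrecRel_list_mem {β : Type*} [Primcodable β] [DecidableEq β] :
    PrimrecRel fun (b : β) (l : List β) => b ∈ l :=
  (PrimrecRel.exists_mem_list Primrec.eq).swap.of_eq fun b l => by simp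

lemma primrecPred_seqContent_subset {ρ : α → List (Option ℕ)} {D : α → List ℕ}
    (hρ : Primrec ρ) (hD : Primrec D) :
    PrimrecPred fun a => seqContent (ρ a) ⊆ (D a).toFinset :=
  (primrecRel_list_mem.forall_mem_list.comp (Primrec.listFilterMap hρ Primrec₂.right) hD).of_eq
    fun a => by simp [Finset.subset_iff]

lemma primrec_boundedHypValue (ch : Code) {k : α → ℕ} {σ : α → List (Option ℕ)} {x : α → ℕ}
    (hk : Primrec k) (hσ : Primrec σ) (hx : Primrec x) :
    Primrec fun a => boundedHypValue ch (k a) (σ a) (x a) :=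
  Primrec.option_bind
    (Code.primrec_evaln.comp ((hk.pair (Primrec.const ch)).pair (Primrec.encode.comp hσ)))
    (Code.primrec_evaln.comp (((hk.comp Primrec.fst).pair
      ((Primrec.ofNat Code).comp Primrec.snd)).pair (hx.comp Primrec.fst))).to₂

lemma primrecPred_refutes (ch : Code) {D : α → List ℕ} {k : α → ℕ} {σ : α → List (Option ℕ)}
    {w : α → List (Option ℕ) × List (Option ℕ) × ℕ} (hD : Primrec D) (hk : Primrec k)
    (hσ : Primrec σ) (hw : Primrec w) :
    PrimrecPred fun a => Refutes ch (D a) (k a) (σ a) (w a) := by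
  have hx := Primrec.snd.comp (Primrec.snd.comp hw)
  have hb₁ := primrec_boundedHypValue ch hk (Primrec.list_append.comp hσ (Primrec.fst.comp hw)) hx
  have hb₂ := primrec_boundedHypValue ch hk
    (Primrec.list_append.comp hσ (Primrec.fst.comp (Primrec.snd.comp hw))) hx
  exact (primrecPred_seqContent_subset (Primrec.fst.comp hw) hD).and
    ((primrecPred_seqContent_subset (Primrec.fst.comp (Primrec.snd.comp hw)) hD).and
    ((Primrec.eq.comp (Primrec.option_isSome.comp hb₁) (Primrec.const true)).and
    ((Primrec.eq.comp (Primrec.option_isSome.comp hb₂) (Primrec.const true)).and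
    (Primrec.eq.comp hb₁ hb₂).not)))

lemma primrecPred_isAlive (ch : Code) {D : α → List ℕ} {t : α → ℕ} {σ : α → List (Option ℕ)}
    (hD : Primrec D) (ht : Primrec t) (hσ : Primrec σ) :
    PrimrecPred fun a => IsAlive ch (D a) (t a) (σ a) := by
  have hrefutes : PrimrecRel fun (w : ℕ) (a : α) => ¬Refutes ch (D a) (t a) (σ a) (ofNat _ w) :=
    (primrecPred_refutes ch (hD.comp Primrec.snd) (ht.comp Primrec.snd) (hσ.comp Primrec.snd)
      ((Primrec.ofNat _).comp Primrec.fst)).not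
  exact (primrecPred_seqContent_subset hσ hD).and
    ((hrefutes.forall_mem_list.comp (Primrec.list_range.comp ht) Primrec.id).of_eq
      fun a => by simp)

lemma primrec_currentRoot (ch : Code) {D : α → List ℕ} {t : α → ℕ} (hD : Primrec D)
    (ht : Primrec t) : Primrec fun a => currentRoot ch (D a) (t a) :=
  (Primrec.ofNat _).comp (Primrec.list_findIdx (Primrec.list_range.comp ht)
    (primrecPred_isAlive ch (hD.comp Primrec.fst) (ht.comp Primrec.fst)
      ((Primrec.ofNat _).comp Primrec.snd)).decide)

/-- The hypotheses of the learner, with `m` coding the pair of the data seen and the time. -/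
lemma partrec₂_guess (ch : Code) :
    Partrec₂ fun m x : ℕ => guess ch (ofNat (List ℕ) m.unpair.1) m.unpair.2 x := by
  have hD : Primrec fun p : ℕ × ℕ => ofNat (List ℕ) p.1.unpair.1 :=
    (Primrec.ofNat _).comp (Primrec.fst.comp (Primrec.unpair.comp Primrec.fst))
  have ht : Primrec fun p : ℕ × ℕ => p.1.unpair.2 :=
    Primrec.snd.comp (Primrec.unpair.comp Primrec.fst)
  have hs : Primrec fun q : (ℕ × ℕ) × ℕ => ofNat (List (Option ℕ) × ℕ) q.2 :=
    (Primrec.ofNat _).comp Primrec.snd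
  have hstep : Primrec₂ fun (p : ℕ × ℕ) (s : ℕ) => extensionValue ch (ofNat (List ℕ) p.1.unpair.1)
      (currentRoot ch (ofNat (List ℕ) p.1.unpair.1) p.1.unpair.2) p.2 (ofNat _ s) :=
    Primrec.ite (primrecPred_seqContent_subset (Primrec.fst.comp hs) (hD.comp Primrec.fst))
      (primrec_boundedHypValue ch (Primrec.snd.comp hs)
        (Primrec.list_append.comp (primrec_currentRoot ch (hD.comp Primrec.fst)
          (ht.comp Primrec.fst)) (Primrec.fst.comp hs)) (Primrec.snd.comp Primrec.fst))
      (Primrec.const none)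
  exact Partrec.rfindOpt hstep.to_comp

end Computability

lemma exists_computable_phi_eq {f : ℕ → ℕ →. ℕ} (hf : Partrec₂ f) :
    ∃ g : ℕ → ℕ, Computable g ∧ ∀ m x, phi (g m) x = f m x := by
  obtain ⟨c, hc⟩ := Code.exists_code.1 (Partrec.nat_iff.1
    (hf.comp (Computable.fst.comp Computable.unpair) (Computable.snd.comp Computable.unpair)))
  refine ⟨fun m => encode (c.curry m),
    (Primrec.encode.comp (Code.primrec₂_curry.comp (Primrec.const c) Primrec.id)).to_comp,
    fun m x => ?_⟩
  simp [phi, Code.eval_curry, hc]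

theorem exists_psdop_learner_of_gop {h : Learner} (hh : PartComputable h) :
    ∃ g, PartComputable g ∧ ∀ L, Learns Gop BcC h L → Learns Psdop BcC g L := by
  obtain ⟨ch, rfl⟩ := Code.exists_code.1 hh
  obtain ⟨g, hg, hphi⟩ := exists_computable_phi_eq (partrec₂_guess ch)
  refine ⟨fun m => Part.some (g m), Partrec.nat_iff.1 hg.partrec, fun L hL T hT => ?_⟩
  obtain ⟨n₀, hn₀⟩ := eventually_atTop.1 (eventually_guess_eq hL hT)
  refine ⟨n₀, fun n hn => ⟨_, rfl, ?_⟩⟩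
  rw [hT, cIndex_and_cset_eq_iff]
  intro x
  simpa [hphi, setCode] using hn₀ n hn x

/-! ### Simulating a partially set-driven learner -/

def sortedDedup (l : List ℕ) : List ℕ := (List.range (l.sum + 1)).filter (· ∈ l)

lemma sortedDedup_eq_sort (l : List ℕ) : sortedDedup l = l.toFinset.sort := by
  have hsorted : (sortedDedup l).toFinset.sort = sortedDedup l :=
    (List.toFinset_sort _ (List.nodup_range.filter _)).2 (List.pairwise_le_range.filter _)
  rw [← hsorted]
  congr 1
  ext x
  simp only [sortedDedup, List.mem_toFinset, List.mem_filter, List.mem_range, decide_eq_true_eq,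
    and_iff_right_iff_imp]
  exact fun hx => Nat.lt_succ_of_le (List.le_sum_of_mem hx)

def psdInput (m : ℕ) : ℕ :=
  Nat.pair (encode (sortedDedup (ofNat (List (Option ℕ)) m).reduceOption))
    (ofNat (List (Option ℕ)) m).length

lemma psdInput_encode_initSeg (T : Text) (n : ℕ) :
    psdInput (encode (initSeg T n)) = Nat.pair (setCode (fincontent T n)) n := by
  simp [psdInput, sortedDedup_eq_sort, setCode, fincontent, length_initSeg, List.reduceOption]

lemma primrec_psdInput : Primrec psdInput := by
  have hσ := Primrec.ofNat (List (Option ℕ))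
  have hsum : Primrec (List.sum : List ℕ → ℕ) :=
    (Primrec.list_foldr Primrec.id (Primrec.const 0) (Primrec.nat_add.comp
      (Primrec.fst.comp Primrec.snd) (Primrec.snd.comp Primrec.snd)).to₂).of_eq
      fun _ => List.sum_eq_foldr.symm
  have hdedup : Primrec sortedDedup :=
    primrecRel_list_mem.listFilter.comp (Primrec.list_range.comp (Primrec.succ.comp hsum))
      Primrec.id
  exact Primrec₂.natPair.comp
    (Primrec.encode.comp (hdedup.comp (Primrec.listFilterMap hσ Primrec₂.right)))
    (Primrec.list_length.comp hσ)

theorem exists_gop_learner_of_psdop {h : Learner} (hh : PartComputable h) :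
    ∃ g, PartComputable g ∧ ∀ L, Learns Psdop BcC h L → Learns Gop BcC g L := by
  refine ⟨fun m => h (psdInput m),
    Partrec.nat_iff.1 ((Partrec.nat_iff.2 hh).comp primrec_psdInput.to_comp), fun L hL T hT => ?_⟩
  have hsim : Gop (fun m => h (psdInput m)) T = Psdop h T := by
    funext n
    simp only [Gop, Psdop, psdInput_encode_initSeg]
  exact hsim ▸ hL T hT

lemma learnableREC_subset {C : Learner → Prop} {β β' : InteractionOp} {δ : Restriction}
    (H : ∀ h, C h → ∃ g, C g ∧ ∀ L, Learns β δ h L → Learns β' δ g L) :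
    LearnableREC C β δ ⊆ LearnableREC C β' δ := by
  rintro ℒ ⟨hrec, h, hh, hℒ⟩
  obtain ⟨g, hg, hgh⟩ := H h hh
  exact ⟨hrec, g, hg, fun L hL => hgh L (hℒ L hL)⟩

/-- `[TxtPsdBc_C]_REC = [TxtGBc_C]_REC`. -/
theorem psd_bcC_eq_g_bcC :
    LearnableREC PartComputable Psdop BcC =
      LearnableREC PartComputable Gop BcC :=
  subset_antisymm (learnableREC_subset fun _ => exists_gop_learner_of_psdop)
    (learnableREC_subset fun _ => exists_psdop_learner_of_gop)

end InductiveInference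
end

section
/- [TxtTdEx_C]_REC = [TxtTdBc_C]_REC; that is, a class of recursive languages is Ex_C-learnable by a partial computable transductive learner if and only if it is Bc_C-learnable by a partial computable transductive learner. -/
namespace InductiveInference

/-! A transductive learner sees one datum at a time, and a datum of `L ∪ {#}` may occur
infinitely often in a text for `L`. So a learner that `Bc_C`-learns `L` outputs, on every such
datum, either `?` or a correct C-index for `L`. To turn this into syntactic convergence, replace a
hypothesis `e` by the learner's output on the least pair `(s, d)` such that `d ∈ C_e ∪ {#}` and
the learner halts on `d` within `s` steps with a hypothesis. The search terminates because `e`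
is a C-index and the learner does output some hypothesis on `L`, and its result depends on `e`
only through `C_e = L`, so all hypotheses are mapped to one and the same index. -/

open Nat.Partrec (Code)
open Encodable Denumerable

theorem exists_text (L : Set ℕ) : ∃ T : Text, content T = L := by
  rcases L.eq_empty_or_nonempty with rfl | hne
  · exact ⟨fun _ => none, by ext x; simp [content]⟩
  · obtain ⟨f, rfl⟩ := (Set.to_countable L).exists_eq_range hne
    exact ⟨fun n => some (f n), by ext x; simp [content, Set.range]⟩

theorem mem_content_of_mem {T : Text} {n x : ℕ} (hx : x ∈ T n) : x ∈ content T := ⟨n, hx⟩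

def interleave (T : Text) (d : Option ℕ) : Text := fun n => if n % 2 = 0 then T (n / 2) else d

theorem interleave_odd (T : Text) (d : Option ℕ) (i : ℕ) : interleave T d (2 * i + 1) = d := by
  simp [interleave]

theorem content_interleave {T : Text} {d : Option ℕ} (hd : ∀ x ∈ d, x ∈ content T) :
    content (interleave T d) = content T := by
  ext x
  constructor
  · rintro ⟨n, hn⟩
    unfold interleave at hn
    split at hn
    · exact ⟨n / 2, hn⟩
    · exact hd x hn
  · rintro ⟨n, hn⟩
    exact ⟨2 * n, by simpa [interleave] using hn⟩

theorem tdop_succ (h : Learner) (T : Text) (i : ℕ) :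
    Tdop h T (i + 1) = (h (encode (T i))).bind fun
      | 0 => Tdop h T i
      | e + 1 => Part.some e := rfl

theorem exists_lt_of_tdop_eq_some {h : Learner} {T : Text} {n e : ℕ}
    (he : Tdop h T n = Part.some e) : ∃ m < n, h (encode (T m)) = Part.some (e + 1) := by
  induction n with
  | zero => exact absurd he.symm (Part.some_ne_none e)
  | succ n ih =>
    rw [tdop_succ] at he
    obtain ⟨v, hv, hev⟩ := Part.mem_bind_iff.1 (Part.eq_some_iff.1 he)
    match v with
    | 0 =>
      obtain ⟨m, hm, hme⟩ := ih (Part.eq_some_iff.2 hev)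
      exact ⟨m, hm.trans n.lt_succ_self, hme⟩
    | w + 1 =>
      obtain rfl : e = w := Part.mem_some_iff.1 hev
      exact ⟨n, n.lt_succ_self, Part.eq_some_iff.2 hv⟩

theorem tdop_eq_some_of_forall_output {g : Learner} {T : Text} {κ m : ℕ}
    (hval : ∀ i, g (encode (T i)) = Part.some 0 ∨ g (encode (T i)) = Part.some (κ + 1))
    (hm : g (encode (T m)) = Part.some (κ + 1)) : ∀ n, m < n → Tdop g T n = Part.some κ := by
  intro n hn
  induction n with
  | zero => omega
  | succ n ih =>
    rw [tdop_succ]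
    rcases Nat.lt_succ_iff_lt_or_eq.1 hn with hlt | rfl
    · rcases hval n with h0 | h1
      · rw [h0, Part.bind_some]; exact ih hlt
      · rw [h1, Part.bind_some]
    · rw [hm, Part.bind_some]

/-- Interleaving a text for `L` with the datum `d` makes the learner read `d` at every odd
position, so its Bc-correct guesses from some point on include its output on `d` itself. -/
theorem output_of_learns_tdop_bcC {h : Learner} {L : Set ℕ} (hL : Learns Tdop BcC h L)
    {d : Option ℕ} (hd : ∀ x ∈ d, x ∈ L) :
    h (encode d) = Part.some 0 ∨
      ∃ e, h (encode d) = Part.some (e + 1) ∧ CIndex e ∧ Cset e = L := by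
  obtain ⟨T, rfl⟩ := exists_text L
  obtain ⟨n₀, hn₀⟩ := hL _ (content_interleave hd)
  obtain ⟨e, he, heC, heL⟩ := hn₀ (2 * n₀ + 2) (by omega)
  rw [content_interleave hd] at heL
  rw [tdop_succ, interleave_odd] at he
  obtain ⟨v, hv, hev⟩ := Part.mem_bind_iff.1 (Part.eq_some_iff.1 he)
  rw [← Part.eq_some_iff] at hv
  match v with
  | 0 => exact .inl hv
  | w + 1 =>
    obtain rfl : e = w := Part.mem_some_iff.1 hev
    exact .inr ⟨e, hv, heC, heL⟩

theorem ExC.bcC {p : HypSeq} {T : Text} (hp : ExC p T) : BcC p T :=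
  let ⟨n₀, hstab, e, he, heC, heT⟩ := hp
  ⟨n₀, fun n hn => ⟨e, (hstab n hn).trans he, heC, heT⟩⟩

theorem phi_partrec : Partrec₂ phi :=
  Code.eval_part.comp ((Computable.ofNat Code).comp Computable.fst) Computable.snd

def IsWitness (c : Code) (L : Set ℕ) (p : ℕ × Option ℕ) : Prop :=
  (∀ x ∈ p.2, x ∈ L) ∧ ∃ v, Code.evaln p.1 c (encode p.2) = some (v + 1)

-- For `p.2 = #` the value `φ_e 0` is ignored; it is queried only to keep the test uniform.
def witnessTest (c : Code) (e : ℕ) (p : ℕ × Option ℕ) : Part Bool :=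
  (phi e (p.2.getD 0)).map fun r =>
    decide ((p.2 = none ∨ r = 1) ∧ 0 < (Code.evaln p.1 c (encode p.2)).getD 0)

theorem witnessTest_partrec (c : Code) : Partrec₂ (witnessTest c) := by
  have hsteps : Primrec fun p : ℕ × Option ℕ => (Code.evaln p.1 c (encode p.2)).getD 0 :=
    Primrec.option_getD.comp (Code.primrec_evaln.comp ((Primrec.fst.pair (Primrec.const c)).pair
      (Primrec.encode.comp Primrec.snd))) (Primrec.const 0)
  have htest : Primrec₂ fun (q : ℕ × (ℕ × Option ℕ)) (r : ℕ) =>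
      decide ((q.2.2 = none ∨ r = 1) ∧ 0 < (Code.evaln q.2.1 c (encode q.2.2)).getD 0) := by
    refine PrimrecPred.decide (PrimrecPred.and (PrimrecPred.or ?_ ?_) ?_)
    · exact Primrec.eq.comp (Primrec.snd.comp (Primrec.snd.comp Primrec.fst)) (Primrec.const none)
    · exact Primrec.eq.comp Primrec.snd (Primrec.const 1)
    · exact Primrec.nat_lt.comp (Primrec.const 0) (hsteps.comp (Primrec.snd.comp Primrec.fst))
  exact (phi_partrec.comp Computable.fst
    ((Computable.option_getD (Computable.snd.comp Computable.snd) (Computable.const 0)))).map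
    htest.to_comp

open Classical in
theorem witnessTest_eq {c : Code} {e : ℕ} (he : CIndex e) (p : ℕ × Option ℕ) :
    witnessTest c e p = Part.some (decide (IsWitness c (Cset e) p)) := by
  obtain ⟨s, d⟩ := p
  have hpos : ∀ o : Option ℕ, 0 < o.getD 0 ↔ ∃ v, o = some (v + 1) := by
    rintro (_ | _ | v) <;> simp
  have hmem : ∀ r, phi e (d.getD 0) = Part.some r → (d = none ∨ r = 1 ↔ ∀ x ∈ d, x ∈ Cset e) := by
    rintro r hr
    cases d with
    | none => simp
    | some x =>
      simp only [Option.getD_some] at hr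
      simp [Cset, hr]
  obtain ⟨r, hr⟩ : ∃ r, phi e (d.getD 0) = Part.some r := (he (d.getD 0)).elim (⟨0, ·⟩) (⟨1, ·⟩)
  rw [witnessTest, hr, Part.map_some, Part.some_inj, decide_eq_decide]
  exact and_congr (hmem r hr) (hpos _)

theorem rfind_eq_some_find {p : ℕ →. Bool} {P : ℕ → Prop} [DecidablePred P]
    (hp : ∀ n, p n = Part.some (decide (P n))) (hP : ∃ n, P n) :
    Nat.rfind p = Part.some (Nat.find hP) := by
  refine Part.eq_some_iff.2 (Nat.mem_rfind.2 ⟨?_, fun hm => ?_⟩)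
  · simpa [hp] using Nat.find_spec hP
  · simpa [hp] using Nat.find_min hP hm

def canonicalOutput (c : Code) (e : ℕ) : Part ℕ :=
  (Nat.rfind fun n => witnessTest c e (ofNat (ℕ × Option ℕ) n)).bind fun n =>
    c.eval (encode (ofNat (ℕ × Option ℕ) n).2)

def canonLearner (c : Code) (m : ℕ) : Part ℕ :=
  (c.eval m).bind fun
    | 0 => Part.some 0
    | e + 1 => canonicalOutput c e

theorem canonLearner_partrec (c : Code) : Nat.Partrec (canonLearner c) := by
  have heval : Partrec c.eval := Code.eval_part.comp (Computable.const c) Computable.id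
  have hrfind : Partrec fun e => Nat.rfind fun n => witnessTest c e (ofNat (ℕ × Option ℕ) n) :=
    Partrec.rfind ((witnessTest_partrec c).comp Computable.fst
      ((Computable.ofNat _).comp Computable.snd)).to₂
  have hdatum : Computable fun n => encode (ofNat (ℕ × Option ℕ) n).2 :=
    Computable.encode.comp (Computable.snd.comp (Computable.ofNat _))
  have houtput : Partrec (canonicalOutput c) :=
    hrfind.bind (heval.comp (hdatum.comp Computable.snd)).to₂
  refine Partrec.nat_iff.1 (heval.bind ?_)
  exact (Partrec.nat_casesOn_right (h := fun _ e => canonicalOutput c e) Computable.snd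
    (Computable.const 0) (houtput.comp Computable.snd).to₂).of_eq fun ⟨_, v⟩ => by cases v <;> rfl

theorem canonLearner_of_eval_eq_zero {c : Code} {m : ℕ} (hm : c.eval m = Part.some 0) :
    canonLearner c m = Part.some 0 := by
  rw [canonLearner, hm, Part.bind_some]

open Classical in
theorem canonLearner_eq_of_witness {c : Code} {L : Set ℕ}
    (hW : ∃ n, IsWitness c L (ofNat (ℕ × Option ℕ) n)) {m e : ℕ}
    (hm : c.eval m = Part.some (e + 1)) (he : CIndex e) (heL : Cset e = L) :
    canonLearner c m = c.eval (encode (ofNat (ℕ × Option ℕ) (Nat.find hW)).2) := by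
  subst heL
  rw [canonLearner, hm, Part.bind_some]
  dsimp only
  rw [canonicalOutput, rfind_eq_some_find (fun n => witnessTest_eq he _) hW, Part.bind_some]

theorem exists_canonical_index {c : Code} {L : Set ℕ} (hL : Learns Tdop BcC c.eval L) :
    ∃ κ, CIndex κ ∧ Cset κ = L ∧ ∀ d : Option ℕ, (∀ x ∈ d, x ∈ L) →
      c.eval (encode d) = Part.some 0 ∨ canonLearner c (encode d) = Part.some (κ + 1) := by
  classical
  obtain ⟨T, hT⟩ := exists_text L
  obtain ⟨n₀, hn₀⟩ := hL T hT
  obtain ⟨e₀, he₀, -⟩ := hn₀ n₀ le_rfl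
  obtain ⟨m, -, hm⟩ := exists_lt_of_tdop_eq_some he₀
  obtain ⟨s, hs⟩ := Code.evaln_complete.1 (Part.eq_some_iff.1 hm)
  have hW : ∃ n, IsWitness c L (ofNat (ℕ × Option ℕ) n) :=
    ⟨encode (s, T m), by
      rw [ofNat_encode]; exact ⟨fun x hx => hT ▸ mem_content_of_mem hx, e₀, hs⟩⟩
  obtain ⟨hdL, v, hv⟩ := Nat.find_spec hW
  obtain ⟨κ, hκ, hκC, hκL⟩ := (output_of_learns_tdop_bcC hL hdL).resolve_left <| by
    rw [Part.eq_some_iff.2 (Code.evaln_sound hv)]; simp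
  refine ⟨κ, hκC, hκL, fun d hd => ?_⟩
  rcases output_of_learns_tdop_bcC hL hd with h0 | ⟨e, he, heC, heL⟩
  · exact .inl h0
  · exact .inr ((canonLearner_eq_of_witness hW he heC heL).trans hκ)

theorem learns_tdop_exC_canonLearner {c : Code} {L : Set ℕ} (hL : Learns Tdop BcC c.eval L) :
    Learns Tdop ExC (canonLearner c) L := by
  obtain ⟨κ, hκC, hκL, hcanon⟩ := exists_canonical_index hL
  intro T hT
  have hdata : ∀ i, ∀ x ∈ T i, x ∈ L := fun i x hx => hT ▸ mem_content_of_mem hx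
  have hval : ∀ i, canonLearner c (encode (T i)) = Part.some 0 ∨
      canonLearner c (encode (T i)) = Part.some (κ + 1) :=
    fun i => (hcanon _ (hdata i)).imp_left canonLearner_of_eval_eq_zero
  obtain ⟨n₀, hn₀⟩ := hL T hT
  obtain ⟨e, he, -⟩ := hn₀ n₀ le_rfl
  obtain ⟨m, -, hm⟩ := exists_lt_of_tdop_eq_some he
  have hstab := tdop_eq_some_of_forall_output hval <| (hcanon _ (hdata m)).resolve_left <| by
    rw [hm]; simp
  refine ⟨m + 1, fun n hn => ?_, κ, hstab _ m.lt_succ_self, hκC, hκL.trans hT.symm⟩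
  rw [hstab n hn, hstab _ m.lt_succ_self]

/-- `[TxtTdEx_C]_REC = [TxtTdBc_C]_REC`. -/
theorem td_exC_eq_td_bcC :
    LearnableREC PartComputable Tdop ExC =
      LearnableREC PartComputable Tdop BcC := by
  ext ℒ
  constructor
  · rintro ⟨hrec, h, hh, hlearn⟩
    exact ⟨hrec, h, hh, fun L hL T hT => (hlearn L hL T hT).bcC⟩
  · rintro ⟨hrec, h, hh, hlearn⟩
    obtain ⟨c, rfl⟩ := Code.exists_code.1 hh
    exact ⟨hrec, canonLearner c, canonLearner_partrec c,
      fun L hL => learns_tdop_exC_canonLearner (hlearn L hL)⟩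

end InductiveInference
end
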